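/- Contracting two vertices of a connected weighted graph into one and deleting at most one edge from a spanning tree of the contracted graph yields a spanning tree whose weight is at most the original tree's weight; consequently for any spanning tree T' of the split graph G', there exists a spanning tree T of G with weight(T) ≤ weight(T'). -/

import Mathlib

open Finset

def Connects {R E : Type*} (ends : E → R × R) (S : Finset E) : Prop :=
  ∀ r s : R,
    Relation.ReflTransGen (fun a b => ∃ e ∈ S, ends e = (a, b) ∨ ends e = (b, a)) r s

def IsSpanningTree {R E : Type*} [DecidableEq E] (ends : E → R × R) (S : Finset E) : Prop :=
  Connects ends S ∧ ∀ e ∈ S, ¬ Connects ends (S.erase e)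

/-- The vertex set obtained from `V` by splitting the vertex `v` into two copies. -/
abbrev SplitVertices (V : Type*) (v : V) := {u : V // u ≠ v} ⊕ Bool

/-- Projection from the split vertex set back to `V`: both copies map to `v`. -/
def splitProj {V : Type*} (v : V) : SplitVertices V v → V :=
  Sum.elim Subtype.val fun _ => v

/-!
Merging vertices keeps a connected graph connected, so the edges of `S'` connect `G`, and every
connecting edge set contains a minimal one, i.e. a spanning tree of `G`. With nonnegative weights,
passing to a subset cannot increase the weight.
-/

lemma splitProj_surjective {V : Type*} (v : V) : Function.Surjective (splitProj v) := by
  intro u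
  by_cases h : u = v
  · exact ⟨Sum.inr true, h.symm⟩
  · exact ⟨Sum.inl ⟨u, h⟩, rfl⟩

lemma Connects.of_surjective {R R' E : Type*} {ends' : E → R' × R'} {ends : E → R × R}
    {f : R' → R} (hf : Function.Surjective f)
    (hends : ∀ e, ends e = (f (ends' e).1, f (ends' e).2)) {S : Finset E}
    (hS : Connects ends' S) : Connects ends S := by
  intro r s
  obtain ⟨r', rfl⟩ := hf r
  obtain ⟨s', rfl⟩ := hf s
  refine Relation.ReflTransGen.lift f ?_ _ _ (hS r' s')
  rintro a b ⟨e, he, h | h⟩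
  · exact ⟨e, he, Or.inl (by simp [hends e, h])⟩
  · exact ⟨e, he, Or.inr (by simp [hends e, h])⟩

lemma Connects.exists_isSpanningTree_subset {R E : Type*} [DecidableEq E] {ends : E → R × R}
    {S : Finset E} (hS : Connects ends S) : ∃ T ⊆ S, IsSpanningTree ends T := by
  induction S using Finset.strongInduction with
  | _ S ih =>
    by_cases hred : ∃ e ∈ S, Connects ends (S.erase e)
    · obtain ⟨e, he, hconn⟩ := hred
      obtain ⟨T, hTS, hT⟩ := ih (S.erase e) (erase_ssubset he) hconn
      exact ⟨T, hTS.trans (erase_subset e S), hT⟩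
    · exact ⟨S, subset_rfl, hS, fun e he hconn => hred ⟨e, he, hconn⟩⟩

theorem stmt2_general {V E : Type*} [DecidableEq E] (v : V) (𝒯 : Finset E)
    (ends' : E → SplitVertices V v × SplitVertices V v) (ends : E → V × V)
    (hproj : ∀ e, ends e = (splitProj v (ends' e).1, splitProj v (ends' e).2))
    (w : E → ℝ) (hw : ∀ e, 0 ≤ w e) :
    ∀ S' ⊆ 𝒯, IsSpanningTree ends' S' →
      ∃ S ⊆ S', IsSpanningTree ends S ∧ ∑ e ∈ S, w e ≤ ∑ e ∈ S', w e := by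
  intro S' _ hS'
  have hconn : Connects ends S' := hS'.1.of_surjective (splitProj_surjective v) hproj
  obtain ⟨S, hSS', hS⟩ := hconn.exists_isSpanningTree_subset
  exact ⟨S, hSS', hS, sum_le_sum_of_subset_of_nonneg hSS' fun e _ _ => hw e⟩

/-- Contracting the two split vertices back together: for any spanning tree `S'` of the
split graph `G'`, deleting at most one edge yields a spanning tree `S ⊆ S'` of `G`
whose weight is at most that of `S'`. -/
theorem stmt2 {V E : Type*} [DecidableEq E] (v : V) (𝒯 : Finset E)
    (ends' : E → SplitVertices V v × SplitVertices V v) (ends : E → V × V)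
    (hproj : ∀ e, ends e = (splitProj v (ends' e).1, splitProj v (ends' e).2))
    (w : E → ℝ) (hw : ∀ e, 0 ≤ w e)
    (hGconn : Connects ends 𝒯) :
    ∀ S' ⊆ 𝒯, IsSpanningTree ends' S' →
      ∃ S ⊆ S', IsSpanningTree ends S ∧ ∑ e ∈ S, w e ≤ ∑ e ∈ S', w e :=
  stmt2_general v 𝒯 ends' ends hproj w hw
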